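/- arXiv:2106.02627 — 5 statements merged into one kernel-verified Lean document; each statement's English description precedes it below -/
import Mathlib

section
/- Let $K$ be a field of characteristic zero, let $n \geq 4$, and let $a_1, a_2, a_3, a_4 \in K$ be algebraically independent over $\mathbb{Q}$. Then the $4 \times 4$ matrix whose $(r,s)$ entry is $(n-s+1) a_r^{n-s}$ for any choice of four distinct column indices $s_1 < s_2 < s_3 < s_4$ from $\{1,\dots,n\}$ (i.e., any four columns of the $4 \times n$ matrix with entries $(n-s+1)a_r^{n-s}$) is invertible. -/
open MvPolynomial Finset

/-- any four columns of the 4×n matrix with (r,s) entry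
`(n-s+1) a_r^(n-s)` (columns 0-indexed here: entry `(n-t) a_r^(n-1-t)`)
form an invertible 4×4 matrix when a₁,…,a₄ are algebraically independent over ℚ. -/
theorem stmt0 {K : Type*} [Field K] [CharZero K] (n : ℕ) (hn : 4 ≤ n)
    (a : Fin 4 → K) (ha : AlgebraicIndependent ℚ a)
    (s : Fin 4 → Fin n) (hs : StrictMono s) :
    IsUnit (Matrix.of fun r t : Fin 4 =>
      ((n - (s t : ℕ) : ℕ) : K) * a r ^ (n - 1 - (s t : ℕ))) := by
  classical
  rw [Matrix.isUnit_iff_isUnit_det, isUnit_iff_ne_zero]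
  set e : Fin 4 → ℕ := fun t => n - 1 - (s t : ℕ) with he
  set c : Fin 4 → ℚ := fun t => ((n - (s t : ℕ) : ℕ) : ℚ) with hc
  have hslt : ∀ t, (s t : ℕ) < n := fun t => (s t).2
  have he_inj : Function.Injective e := by
    intro i j hij
    rcases lt_trichotomy i j with h | h | h
    · exfalso
      have h1 : (s i : ℕ) < (s j : ℕ) := hs h
      have h2 := hslt j
      simp only [he] at hij; omega
    · exact h
    · exfalso
      have h1 : (s j : ℕ) < (s i : ℕ) := hs h
      have h2 := hslt i
      simp only [he] at hij; omega
  set M : Matrix (Fin 4) (Fin 4) (MvPolynomial (Fin 4) ℚ) :=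
    Matrix.of (fun r t : Fin 4 => (C (c t)) * X r ^ e t) with hM
  have hdet : (Matrix.of fun r t : Fin 4 =>
      ((n - (s t : ℕ) : ℕ) : K) * a r ^ (n - 1 - (s t : ℕ))).det
      = aeval a M.det := by
    rw [AlgHom.map_det]
    congr 1
    ext r t
    simp [hM, hc, he]
  rw [hdet]
  have hinj : Function.Injective (aeval a : MvPolynomial (Fin 4) ℚ →ₐ[ℚ] K) :=
    algebraicIndependent_iff_injective_aeval.mp ha
  intro h0
  have hP0 : M.det = 0 := hinj (by simpa using h0)
  -- show M.det ≠ 0 via a nonzero coefficient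
  set m : Equiv.Perm (Fin 4) → (Fin 4 →₀ ℕ) :=
    fun σ => ∑ t, Finsupp.single (σ t) (e t) with hm
  have hmval : ∀ (σ : Equiv.Perm (Fin 4)) (t : Fin 4), m σ (σ t) = e t := by
    intro σ t
    rw [hm, Finsupp.finset_sum_apply]
    rw [Finset.sum_eq_single t]
    · simp
    · intro u _ hu
      rw [Finsupp.single_apply, if_neg (fun hh => hu (σ.injective hh))]
    · simp
  have hmid : ∀ σ : Equiv.Perm (Fin 4), m σ = m 1 → σ = 1 := by
    intro σ hσ
    ext t
    have h1 : m σ (σ t) = e t := hmval σ t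
    have h2 : m 1 (σ t) = e (σ t) := hmval 1 (σ t)
    rw [hσ, h2] at h1
    exact congrArg Fin.val (he_inj h1)
  have hcoeff : MvPolynomial.coeff (m 1) M.det = ∏ t, c t := by
    rw [Matrix.det_apply]
    have hterm : ∀ σ : Equiv.Perm (Fin 4),
        (∏ i, M (σ i) i) = monomial (m σ) (∏ t, c t) := by
      intro σ
      simp only [hM, Matrix.of_apply, X_pow_eq_monomial]
      rw [Finset.prod_mul_distrib, ← map_prod, Fin.prod_univ_four, Fin.prod_univ_four,
        monomial_mul, monomial_mul, monomial_mul, C_mul_monomial, mul_one, mul_one, mul_one]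
      congr 1
      · simp [hm, Fin.sum_univ_four]
      · ring
    rw [MvPolynomial.coeff_sum] -- sum of smul; need coeff of smul
    rw [Finset.sum_eq_single 1]
    · rw [hterm, coeff_smul, coeff_monomial, if_pos rfl]; simp
    · intro σ _ hσ
      rw [hterm, coeff_smul, coeff_monomial, if_neg (fun hh => hσ (hmid σ hh)), smul_zero]
    · simp
  have hcne : (∏ t, c t) ≠ 0 := by
    apply Finset.prod_ne_zero_iff.mpr
    intro t _
    have := hslt t
    simp only [hc, ne_eq, Nat.cast_eq_zero]
    omega
  rw [hP0] at hcoeff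
  simp at hcoeff
  exact hcne hcoeff.symm
end

section
/- Let $K$ be a field and let $a_1, \dots, a_m \in K$ be algebraically independent over $\mathbb{Q}$. For any distinct natural numbers $k_1, \dots, k_m$, the $m \times m$ matrix with $(r,s)$ entry $a_r^{k_s}$ is invertible. -/
open MvPolynomial

/-- generalized Vandermonde invertibility. -/
theorem stmt1 {K : Type*} [Field K] [CharZero K] (m : ℕ)
    (a : Fin m → K) (ha : AlgebraicIndependent ℚ a)
    (k : Fin m → ℕ) (hk : Function.Injective k) :
    IsUnit (Matrix.of fun r s : Fin m => a r ^ k s) := by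
  rw [Matrix.isUnit_iff_isUnit_det, isUnit_iff_ne_zero]
  set P : MvPolynomial (Fin m) ℚ :=
    Matrix.det (Matrix.of fun r s : Fin m => (X r : MvPolynomial (Fin m) ℚ) ^ k s) with hP
  have hdet : (Matrix.of fun r s : Fin m => a r ^ k s).det = MvPolynomial.aeval a P := by
    rw [hP, AlgHom.map_det]
    congr 1
    ext r s
    simp
  have hPne : P ≠ 0 := by
    intro h
    have hc : MvPolynomial.coeff (∑ i, Finsupp.single i (k i)) P = 1 := by
      rw [hP, Matrix.det_apply]
      rw [MvPolynomial.coeff_sum]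
      have key : ∀ σ : Equiv.Perm (Fin m),
          MvPolynomial.coeff (∑ i, Finsupp.single i (k i))
            (Equiv.Perm.sign σ • ∏ i, (Matrix.of fun r s : Fin m =>
              (X r : MvPolynomial (Fin m) ℚ) ^ k s) (σ i) i)
          = if σ = 1 then 1 else 0 := by
        intro σ
        have hprod : (∏ i, (Matrix.of fun r s : Fin m =>
            (X r : MvPolynomial (Fin m) ℚ) ^ k s) (σ i) i)
            = monomial (∑ i, Finsupp.single (σ i) (k i)) (1 : ℚ) := by
          rw [monomial_sum_one]
          simp [X_pow_eq_monomial]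
        rw [hprod, MvPolynomial.coeff_smul, MvPolynomial.coeff_monomial]
        by_cases hσ : σ = 1
        · subst hσ; simp
        · rw [if_neg, if_neg hσ]
          · simp
          · intro heq
            apply hσ
            ext j
            by_contra hj
            have := DFunLike.congr_fun heq (σ j)
            simp [Finsupp.single_apply, Finset.sum_ite_eq'] at this
            exact hj (congrArg Fin.val (hk this).symm)
      rw [Finset.sum_congr rfl fun σ _ => key σ]
      simp
    rw [h] at hc
    simp at hc
  rw [hdet]
  intro h
  apply hPne
  apply ha
  rw [h, map_zero]
end

section
/- Let $K$ be a field and let $a_1, \dots, a_m \in K$ be algebraically independent over $\mathbb{Q}$, with $m \geq 1$ and distinct exponents $j_1 < j_2 < \dots < j_m$ with each $j_t \geq 1$. Then the $m \times m$ matrix with $(r,s)$ entry $j_s\, a_r^{j_s - 1}$ is invertible. -/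
open MvPolynomial Finsupp

lemma prod_monomial' {α σ R : Type*} [CommSemiring R] (s : Finset α) (f : α → σ →₀ ℕ)
    (c : α → R) :
    ∏ i ∈ s, MvPolynomial.monomial (f i) (c i)
      = MvPolynomial.monomial (∑ i ∈ s, f i) (∏ i ∈ s, c i) := by
  induction s using Finset.cons_induction with
  | empty => simp
  | cons a s ha ih =>
      simp [Finset.prod_cons, Finset.sum_cons, ih, MvPolynomial.monomial_mul]

/-- the matrix with entries `j_s * a_r^(j_s - 1)` is invertible. -/
theorem stmt2 {K : Type*} [Field K] [CharZero K] (m : ℕ) (hm : 1 ≤ m)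
    (a : Fin m → K) (ha : AlgebraicIndependent ℚ a)
    (j : Fin m → ℕ) (hj : StrictMono j) (hj1 : ∀ t, 1 ≤ j t) :
    IsUnit (Matrix.of fun r s : Fin m => ((j s : ℕ) : K) * a r ^ (j s - 1)) := by
  set M : Matrix (Fin m) (Fin m) (MvPolynomial (Fin m) ℚ) :=
    Matrix.of fun r s => MvPolynomial.C ((j s : ℚ)) * MvPolynomial.X r ^ (j s - 1) with hM
  have hterm : ∀ σ : Equiv.Perm (Fin m),
      (∏ i, M (σ i) i)
        = MvPolynomial.monomial (∑ i, Finsupp.single (σ i) (j i - 1)) (∏ i, (j i : ℚ)) := by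
    intro σ
    rw [← prod_monomial']
    refine Finset.prod_congr rfl fun i _ => ?_
    simp only [hM, Matrix.of_apply]
    exact MvPolynomial.C_mul_X_pow_eq_monomial
  set d : Fin m →₀ ℕ := ∑ i, Finsupp.single i (j i - 1) with hd
  have hinj : Function.Injective fun i => j i - 1 := by
    intro x y hxy
    have hx := hj1 x
    have hy := hj1 y
    simp only at hxy
    exact hj.injective (by omega)
  have hexp : ∀ σ : Equiv.Perm (Fin m),
      (∑ i, Finsupp.single (σ i) (j i - 1)) = d → σ = 1 := by
    intro σ hσ
    ext r
    have h := DFunLike.congr_fun hσ (σ r)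
    simp only [hd, Finsupp.finset_sum_apply, Finsupp.single_apply] at h
    rw [Finset.sum_eq_single r (fun b _ hb => if_neg (fun h' => hb (σ.injective h')))
      (by simp), if_pos rfl] at h
    rw [Finset.sum_eq_single (σ r) (fun b _ hb => if_neg hb) (by simp), if_pos rfl] at h
    have h2 := hinj h
    rw [← h2]
    rfl
  have hprod : (∏ i, (j i : ℚ)) ≠ 0 :=
    Finset.prod_ne_zero_iff.mpr fun i _ => Nat.cast_ne_zero.mpr (by have := hj1 i; omega)
  have hcoeff : MvPolynomial.coeff d M.det = ∏ i, (j i : ℚ) := by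
    rw [Matrix.det_apply, MvPolynomial.coeff_sum]
    rw [Finset.sum_eq_single (1 : Equiv.Perm (Fin m))]
    · rw [hterm 1, MvPolynomial.coeff_smul, MvPolynomial.coeff_monomial,
        if_pos (by rw [hd]; simp only [Equiv.Perm.coe_one, id_eq]), Equiv.Perm.sign_one, one_smul]
    · intro σ _ hσ
      rw [hterm σ, MvPolynomial.coeff_smul, MvPolynomial.coeff_monomial,
        if_neg (fun h => hσ (hexp σ h)), smul_zero]
    · simp
  have hdet : M.det ≠ 0 := fun h => hprod (by rw [← hcoeff, h, MvPolynomial.coeff_zero])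
  have hainj : Function.Injective (MvPolynomial.aeval a : MvPolynomial (Fin m) ℚ →ₐ[ℚ] K) :=
    algebraicIndependent_iff_injective_aeval.mp ha
  have hmap : (M.map (MvPolynomial.aeval a))
      = Matrix.of fun r s : Fin m => ((j s : ℕ) : K) * a r ^ (j s - 1) := by
    ext r s
    simp [hM]
  have hdetK : (Matrix.of fun r s : Fin m => ((j s : ℕ) : K) * a r ^ (j s - 1)).det ≠ 0 := by
    rw [← hmap, show M.map ⇑(MvPolynomial.aeval a)
        = (MvPolynomial.aeval (R := ℚ) a).mapMatrix M from rfl, ← AlgHom.map_det]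
    intro h
    exact hdet (hainj (by rw [h, map_zero]))
  exact (Matrix.isUnit_iff_isUnit_det _).mpr (isUnit_iff_ne_zero.mpr hdetK)
end

section
/- Let $(K,\delta)$ be a differential field of characteristic zero. Given elements $a_0,\dots,a_\ell, b_0,\dots,b_\ell \in K$ with $a_\ell \neq 0$, define $\tilde{b}_i$ for $0 \leq i \leq \ell-1$ as in the Algorithm A substitution, and assume $\tilde{b}_{\ell-1} \neq 0$; define $\tilde{a}_i = a_i - \sum_{k=0}^{\ell-i} \binom{\ell-1}{\ell-i-k} \tilde{b}_{\ell-1-k} \left(\frac{a_\ell}{\tilde{b}_{\ell-1}}\right)^{(\ell-i-k)}$ for $1 \leq i \leq \ell-1$ and $\tilde{a}_0 = a_0$. Then the tuple $(b_i, a_i : 0 \leq i \leq \ell)$ and the tuple $(b_\ell, a_\ell, \tilde{b}_i, \tilde{a}_i : 0 \leq i \leq \ell-1)$ generate the same differential subfield of $K$ over $\mathbb{Q}$. -/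
/-- The differential subfield of `K` generated over `ℚ` by a set `S`. -/
def dGen {K : Type*} [Field K] (d : K → K) (S : Set K) : Subfield K :=
  Subfield.closure (⋃ n : ℕ, (d^[n]) '' S)

lemma subset_dGen {K : Type*} [Field K] (d : K → K) (S : Set K) : S ⊆ dGen d S := fun x hx =>
  Subfield.subset_closure (Set.mem_iUnion.2 ⟨0, ⟨x, hx, rfl⟩⟩)

lemma dGen_map_mem {K : Type*} [Field K] [CharZero K] (d : Derivation ℚ K K) (S : Set K)
    {x : K} (hx : x ∈ dGen (⇑d) S) : d x ∈ dGen (⇑d) S := by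
  induction hx using Subfield.closure_induction with
  | mem x hx =>
      obtain ⟨n, y, hy, rfl⟩ := Set.mem_iUnion.1 hx
      rw [← Function.iterate_succ_apply' (⇑d)]
      exact Subfield.subset_closure (Set.mem_iUnion.2 ⟨n + 1, ⟨y, hy, rfl⟩⟩)
  | one => rw [Derivation.map_one_eq_zero]; exact zero_mem _
  | add x y hx hy hdx hdy => rw [map_add]; exact add_mem hdx hdy
  | neg x hx hdx => rw [map_neg]; exact neg_mem hdx
  | inv x hx hdx =>
      rw [Derivation.leibniz_inv, smul_eq_mul]
      exact mul_mem (neg_mem (pow_mem (inv_mem hx) 2)) hdx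
  | mul x y hx hy hdx hdy =>
      rw [Derivation.leibniz, smul_eq_mul, smul_eq_mul]
      exact add_mem (mul_mem hx hdy) (mul_mem hy hdx)

lemma dGen_iterate_mem {K : Type*} [Field K] [CharZero K] (d : Derivation ℚ K K) (S : Set K)
    (n : ℕ) {x : K} (hx : x ∈ dGen (⇑d) S) : (⇑d)^[n] x ∈ dGen (⇑d) S := by
  induction n with
  | zero => exact hx
  | succ n ih => rw [Function.iterate_succ_apply']; exact dGen_map_mem d S ih

lemma dGen_le {K : Type*} [Field K] [CharZero K] (d : Derivation ℚ K K) {S T : Set K}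
    (h : S ⊆ ↑(dGen (⇑d) T)) : dGen (⇑d) S ≤ dGen (⇑d) T := by
  apply Subfield.closure_le.2
  rintro x hx
  obtain ⟨n, y, hy, rfl⟩ := Set.mem_iUnion.1 hx
  exact dGen_iterate_mem d T n (h hy)

/-- Lemma 4.4 / lem:ABnew: the tuple `(bᵢ, aᵢ : 0 ≤ i ≤ ℓ)` and
the tuple `(b_ℓ, a_ℓ, b̃ᵢ, ãᵢ : 0 ≤ i ≤ ℓ-1)` generate the same differential
subfield of `K` over `ℚ`. -/
theorem stmt7 {K : Type*} [Field K] [CharZero K] (d : Derivation ℚ K K)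
    (ℓ : ℕ) (hℓ : 1 ≤ ℓ) (a b tb ta : ℕ → K) (haℓ : a ℓ ≠ 0)
    (htb : ∀ i < ℓ, tb i = b i - ∑ k ∈ Finset.range (ℓ - i + 1),
      (Nat.choose ℓ (ℓ - i - k) : K) * a (ℓ - k) * (⇑d)^[ℓ - i - k] (b ℓ / a ℓ))
    (htbne : tb (ℓ - 1) ≠ 0)
    (hta0 : ta 0 = a 0)
    (hta : ∀ i, 1 ≤ i → i < ℓ → ta i = a i - ∑ k ∈ Finset.range (ℓ - i + 1),
      (Nat.choose (ℓ - 1) (ℓ - i - k) : K) * tb (ℓ - 1 - k) *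
        (⇑d)^[ℓ - i - k] (a ℓ / tb (ℓ - 1))) :
    dGen (⇑d) (b '' Set.Iic ℓ ∪ a '' Set.Iic ℓ)
      = dGen (⇑d) ({b ℓ, a ℓ} ∪ tb '' Set.Iio ℓ ∪ ta '' Set.Iio ℓ) := by
  set L : Set K := b '' Set.Iic ℓ ∪ a '' Set.Iic ℓ with hL
  set R : Set K := {b ℓ, a ℓ} ∪ tb '' Set.Iio ℓ ∪ ta '' Set.Iio ℓ with hR
  -- generator memberships
  have hbℓR : b ℓ ∈ dGen (⇑d) R := subset_dGen _ _ (by left; left; left; rfl)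
  have haℓR : a ℓ ∈ dGen (⇑d) R := subset_dGen _ _ (by left; left; right; rfl)
  have htbR : ∀ j < ℓ, tb j ∈ dGen (⇑d) R := fun j hj =>
    subset_dGen _ _ (Or.inl (Or.inr ⟨j, hj, rfl⟩))
  have htaR : ∀ j < ℓ, ta j ∈ dGen (⇑d) R := fun j hj =>
    subset_dGen _ _ (Or.inr ⟨j, hj, rfl⟩)
  have hbL : ∀ j ≤ ℓ, b j ∈ dGen (⇑d) L := fun j hj =>
    subset_dGen _ _ (Or.inl ⟨j, hj, rfl⟩)
  have haL : ∀ j ≤ ℓ, a j ∈ dGen (⇑d) L := fun j hj =>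
    subset_dGen _ _ (Or.inr ⟨j, hj, rfl⟩)
  have hprev : ℓ - 1 < ℓ := Nat.sub_lt hℓ one_pos
  -- a j ∈ dGen R for all j ≤ ℓ
  have haR : ∀ j ≤ ℓ, a j ∈ dGen (⇑d) R := by
    intro j hj
    rcases eq_or_lt_of_le hj with rfl | hjlt
    · exact haℓR
    rcases Nat.eq_zero_or_pos j with rfl | hj1
    · rw [← hta0]; exact htaR 0 hℓ
    have : a j = ta j + ∑ k ∈ Finset.range (ℓ - j + 1),
        (Nat.choose (ℓ - 1) (ℓ - j - k) : K) * tb (ℓ - 1 - k) *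
          (⇑d)^[ℓ - j - k] (a ℓ / tb (ℓ - 1)) := by
      rw [hta j hj1 hjlt]; ring
    rw [this]
    refine add_mem (htaR j hjlt) (Subfield.sum_mem _ fun k _ => ?_)
    exact mul_mem (mul_mem (natCast_mem _ _)
        (htbR _ (lt_of_le_of_lt (Nat.sub_le _ _) hprev)))
      (dGen_iterate_mem d R _ (div_mem haℓR (htbR _ hprev)))
  -- b j ∈ dGen R for all j ≤ ℓ
  have hbR : ∀ j ≤ ℓ, b j ∈ dGen (⇑d) R := by
    intro j hj
    rcases eq_or_lt_of_le hj with rfl | hjlt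
    · exact hbℓR
    have : b j = tb j + ∑ k ∈ Finset.range (ℓ - j + 1),
        (Nat.choose ℓ (ℓ - j - k) : K) * a (ℓ - k) * (⇑d)^[ℓ - j - k] (b ℓ / a ℓ) := by
      rw [htb j hjlt]; ring
    rw [this]
    refine add_mem (htbR j hjlt) (Subfield.sum_mem _ fun k _ => ?_)
    exact mul_mem (mul_mem (natCast_mem _ _) (haR _ (Nat.sub_le _ _)))
      (dGen_iterate_mem d R _ (div_mem hbℓR haℓR))
  -- tb j ∈ dGen L for j < ℓ
  have htbL : ∀ j < ℓ, tb j ∈ dGen (⇑d) L := by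
    intro j hj
    rw [htb j hj]
    refine sub_mem (hbL j hj.le) (Subfield.sum_mem _ fun k _ => ?_)
    exact mul_mem (mul_mem (natCast_mem _ _) (haL _ (Nat.sub_le _ _)))
      (dGen_iterate_mem d L _ (div_mem (hbL ℓ le_rfl) (haL ℓ le_rfl)))
  -- ta j ∈ dGen L for j < ℓ
  have htaL : ∀ j < ℓ, ta j ∈ dGen (⇑d) L := by
    intro j hj
    rcases Nat.eq_zero_or_pos j with rfl | hj1
    · rw [hta0]; exact haL 0 (Nat.zero_le _)
    rw [hta j hj1 hj]
    refine sub_mem (haL j hj.le) (Subfield.sum_mem _ fun k _ => ?_)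
    exact mul_mem (mul_mem (natCast_mem _ _)
        (htbL _ (lt_of_le_of_lt (Nat.sub_le _ _) hprev)))
      (dGen_iterate_mem d L _ (div_mem (haL ℓ le_rfl) (htbL _ hprev)))
  apply le_antisymm
  · apply dGen_le
    rintro x (⟨j, hj, rfl⟩ | ⟨j, hj, rfl⟩)
    · exact hbR j hj
    · exact haR j hj
  · apply dGen_le
    rintro x ((h | ⟨j, hj, rfl⟩) | ⟨j, hj, rfl⟩)
    · rcases h with rfl | rfl
      · exact hbL ℓ le_rfl
      · exact haL ℓ le_rfl
    · exact htbL j hj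
    · exact htaL j hj
end

section
/- Let $F \subseteq K$ be an extension of differential fields of characteristic zero, let $T \in GL_m(F)$, and suppose $\alpha_1, \dots, \alpha_m \in K$ are independent differential transcendentals over $F$ (the family of all their derivatives is algebraically independent over $F$). If $\beta = T\alpha + r$ for some $r \in F^m$, then $\beta_1, \dots, \beta_m$ are also independent differential transcendentals over $F$. -/
/-!
Both tuples of derivatives are handled through their truncations at order `n`, which are finite
families of the same size `m (n + 1)`. Since `α = T⁻¹ (β - r)` with coefficients in `F` and `F` is
closed under `d`, every `α_i^{(k)}` with `k ≤ n` is a polynomial over `F` in the `β_j^{(l)}` with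
`l ≤ n`. The algebra generated by the truncation of `β` therefore contains `m (n + 1)`
algebraically independent elements, so its transcendence degree forces its `m (n + 1)`
generators to be a transcendence basis.
-/

open Set Algebra Matrix

theorem AlgebraicIndependent.of_mem_adjoin_range {ι R A : Type*} [Finite ι] [CommRing R]
    [CommRing A] [IsDomain A] [Algebra R A] {x y : ι → A} (hx : AlgebraicIndependent R x)
    (hxy : ∀ i, x i ∈ adjoin R (range y)) : AlgebraicIndependent R y := by
  nontriviality R
  set B := adjoin R (range y)
  let y' : ι → B := fun i => ⟨y i, subset_adjoin ⟨i, rfl⟩⟩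
  have hx' : AlgebraicIndependent R fun i => (⟨x i, hxy i⟩ : B) := hx.of_comp B.val
  have : FaithfulSMul R B :=
    (faithfulSMul_iff_algebraMap_injective R B).mpr hx'.algebraMap_injective
  have hy' : adjoin R (range y') = ⊤ := by
    rw [← adjoin_adjoin_coe_preimage]
    congr 1
    ext b
    simp [y', Subtype.ext_iff]
  have : Algebra.IsAlgebraic (adjoin R (range y')) B :=
    ⟨fun b => isAlgebraic_algebraMap (⟨b, hy' ▸ mem_top⟩ : adjoin R (range y'))⟩
  exact (IsAlgebraic.isTranscendenceBasis_of_lift_le_trdeg_of_finite R y'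
    hx'.lift_cardinalMk_le_trdeg).1.map' (f := B.val) Subtype.val_injective

theorem algebraicIndependent_of_forall_fin {ι R A : Type*} [CommRing R] [CommRing A]
    [Algebra R A] {x : ι × ℕ → A}
    (h : ∀ n, AlgebraicIndependent R (x ∘ Prod.map id (Fin.val : Fin (n + 1) → ℕ))) :
    AlgebraicIndependent R x := by
  refine algebraicIndependent_of_finite_type fun t ht => ?_
  obtain ⟨n, hn⟩ := (ht.image Prod.snd).bddAbove
  refine (h n).comp (fun p : t => (p.1.1, ⟨p.1.2, Nat.lt_succ_of_le (hn ⟨p, p.2, rfl⟩)⟩)) ?_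
  rintro ⟨⟨i, k⟩, _⟩ ⟨⟨j, l⟩, _⟩ hpq
  simp_all

theorem Matrix.mem_adjoin_range_mulVec_add {ι R A : Type*} [Fintype ι] [DecidableEq ι]
    [CommRing R] [CommRing A] [Algebra R A] {T : Matrix ι ι R} (hT : IsUnit T) (α : ι → A)
    (r : ι → R) (i : ι) :
    α i ∈ adjoin R (range (T.map (algebraMap R A) *ᵥ α + algebraMap R A ∘ r)) := by
  set β := T.map (algebraMap R A) *ᵥ α + algebraMap R A ∘ r
  have hα : α = T⁻¹.map (algebraMap R A) *ᵥ (β - algebraMap R A ∘ r) := by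
    rw [add_sub_cancel_right, mulVec_mulVec, ← Matrix.map_mul,
      nonsing_inv_mul T ((isUnit_iff_isUnit_det T).mp hT),
      Matrix.map_one _ (map_zero _) (map_one _), one_mulVec]
  rw [hα]
  exact Subalgebra.sum_mem _ fun j _ => mul_mem (Subalgebra.algebraMap_mem _ _)
    (sub_mem (subset_adjoin ⟨j, rfl⟩) (Subalgebra.algebraMap_mem _ _))

namespace Derivation

variable {R K ι : Type*} [CommRing R] [Field K] [Algebra R K] (d : Derivation R K K)
  {F : Subfield K}

theorem mem_adjoin_union_image (hF : ∀ x ∈ F, d x ∈ F) {s : Set K} {x : K}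
    (hx : x ∈ adjoin F s) : d x ∈ adjoin F (s ∪ d '' s) := by
  have hmono : adjoin F s ≤ adjoin F (s ∪ d '' s) := adjoin_mono subset_union_left
  induction hx using adjoin_induction with
  | mem x hx => exact subset_adjoin (Or.inr ⟨x, hx, rfl⟩)
  | algebraMap c => exact Subalgebra.algebraMap_mem _ (⟨d c, hF c c.2⟩ : F)
  | add x y _ _ hdx hdy => rw [map_add]; exact add_mem hdx hdy
  | mul x y hx hy hdx hdy =>
    rw [leibniz, smul_eq_mul, smul_eq_mul]
    exact add_mem (mul_mem (hmono hx) hdy) (mul_mem (hmono hy) hdx)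

theorem iterate_mem_adjoin_range_iterate (hF : ∀ x ∈ F, d x ∈ F) {β : ι → K} {x : K}
    (hx : x ∈ adjoin F (range β)) {k n : ℕ} (hkn : k ≤ n) :
    d^[k] x ∈ adjoin F (range fun p : ι × Fin (n + 1) => d^[p.2] (β p.1)) := by
  induction k generalizing n with
  | zero =>
    refine adjoin_mono ?_ hx
    rintro _ ⟨i, rfl⟩
    exact ⟨(i, 0), rfl⟩
  | succ k ih =>
    obtain ⟨n, rfl⟩ : ∃ n', n = n' + 1 := ⟨n - 1, by omega⟩
    rw [Function.iterate_succ_apply']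
    refine adjoin_mono ?_ (d.mem_adjoin_union_image hF (ih (n := n) (by omega)))
    rintro _ (⟨⟨i, j⟩, rfl⟩ | ⟨_, ⟨⟨i, j⟩, rfl⟩, rfl⟩)
    · exact ⟨(i, j.castSucc), rfl⟩
    · exact ⟨(i, j.succ), Function.iterate_succ_apply' ..⟩

end Derivation

/-- an invertible linear change over a differential subfield `F`
(plus a translation by a vector over `F`) preserves the property of being a
tuple of independent differential transcendentals over `F`. -/
theorem stmt14 {K : Type*} [Field K] [CharZero K] (d : Derivation ℚ K K)
    (F : Subfield K) (hF : ∀ x ∈ F, d x ∈ F) (m : ℕ)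
    (T : Matrix (Fin m) (Fin m) K) (hT : ∀ i j, T i j ∈ F) (hTu : IsUnit T)
    (α β r : Fin m → K) (hr : ∀ i, r i ∈ F)
    (hα : AlgebraicIndependent (↥F) (fun p : Fin m × ℕ => (⇑d)^[p.2] (α p.1)))
    (hβdef : ∀ i, β i = (∑ j, T i j * α j) + r i) :
    AlgebraicIndependent (↥F) (fun p : Fin m × ℕ => (⇑d)^[p.2] (β p.1)) := by
  obtain ⟨T, rfl⟩ : ∃ T' : Matrix (Fin m) (Fin m) F, T'.map (algebraMap F K) = T :=
    ⟨.of fun i j => ⟨T i j, hT i j⟩, rfl⟩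
  obtain ⟨r, rfl⟩ : ∃ r' : Fin m → F, algebraMap F K ∘ r' = r := ⟨fun i => ⟨r i, hr i⟩, rfl⟩
  have hTu : IsUnit T := by
    rw [isUnit_iff_isUnit_det, isUnit_iff_ne_zero] at hTu ⊢
    exact fun h => hTu (by rw [← RingHom.mapMatrix_apply, ← RingHom.map_det, h, map_zero])
  have hβ : β = T.map (algebraMap F K) *ᵥ α + algebraMap F K ∘ r := funext hβdef
  have hαβ : ∀ i, α i ∈ adjoin F (range β) := hβ ▸ mem_adjoin_range_mulVec_add hTu α r
  refine algebraicIndependent_of_forall_fin fun n => ?_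
  refine (hα.comp _ (Function.injective_id.prodMap Fin.val_injective)).of_mem_adjoin_range
    fun p => ?_
  exact d.iterate_mem_adjoin_range_iterate hF (hαβ p.1) p.2.is_le
end
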